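/- Monotone fluxes yield sign-definite incremental coefficients: let F(u,v) be C¹ with ∂_u F ≥ 0 and ∂_v F ≤ 0, and let u^±_{j+1/2} be the van Albada MUSCL reconstruction u^-_{j+1/2} = ū_j + u'_j/2, u^+_{j+1/2} = ū_{j+1} − u'_{j+1}/2 with u'_j = ψ_vA(Δū_{j−1/2}, Δū_{j+1/2}). Then C_{j−1/2} := [F(u^-_{j+1/2}, u^+_{j−1/2}) − F(u^-_{j−1/2}, u^+_{j−1/2})]/Δū_{j−1/2} ≥ 0 and D_{j+1/2} := −[F(u^-_{j+1/2}, u^+_{j+1/2}) − F(u^-_{j+1/2}, u^+_{j−1/2})]/Δū_{j+1/2} ≥ 0, whenever the denominators are nonzero. -/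

import Mathlib

/-!
Both coefficients are difference quotients of a monotone (resp. antitone) section of `F`, so
they are nonnegative as soon as the reconstructed interface values move in the same direction
as the cell averages. With `a = Δū_{j-1/2}` one has `u⁻_{j+1/2} - u⁻_{j-1/2} = a + (ψ(a,b) - ψ(a,c))/2`,
and `|2ψ(a,b) - a| ≤ √2 |a|` for every `b` bounds the slope correction by `(√2/2)|a| ≤ |a|`;
the case of `u⁺` is symmetric.
-/

noncomputable def vanAlbada (a b : ℝ) : ℝ := (a ^ 2 * b + a * b ^ 2) / (a ^ 2 + b ^ 2)

lemma vanAlbada_comm (a b : ℝ) : vanAlbada a b = vanAlbada b a := by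
  unfold vanAlbada; ring

lemma abs_two_mul_vanAlbada_sub_le (a b : ℝ) : |2 * vanAlbada a b - a| ≤ √2 * |a| := by
  rcases (add_nonneg (sq_nonneg a) (sq_nonneg b)).eq_or_lt with hs | hs
  · have ha : a = 0 := by nlinarith [sq_nonneg a, sq_nonneg b]
    simp [vanAlbada, ha]
  -- `(2ab)² + (b² - a²)² = (a² + b²)²`, so Cauchy–Schwarz against `(1, 1)` gives the factor `√2`.
  have hCS : |2 * a * b + b ^ 2 - a ^ 2| ≤ √2 * (a ^ 2 + b ^ 2) := by
    refine abs_le_of_sq_le_sq ?_ (by positivity)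
    nlinarith [Real.sq_sqrt (zero_le_two : (0 : ℝ) ≤ 2), sq_nonneg (2 * a * b - b ^ 2 + a ^ 2)]
  have hform : 2 * vanAlbada a b - a = a * (2 * a * b + b ^ 2 - a ^ 2) / (a ^ 2 + b ^ 2) := by
    rw [eq_div_iff hs.ne']; unfold vanAlbada; field_simp; ring
  rw [hform, abs_div, abs_mul, abs_of_pos hs, div_le_iff₀ hs]
  linarith [mul_le_mul_of_nonneg_left hCS (abs_nonneg a)]

lemma abs_vanAlbada_sub_vanAlbada_le (a b c : ℝ) :
    |vanAlbada a b - vanAlbada a c| ≤ √2 * |a| := by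
  calc |vanAlbada a b - vanAlbada a c|
      = |(2 * vanAlbada a b - a) - (2 * vanAlbada a c - a)| / 2 := by
        rw [show (2 * vanAlbada a b - a) - (2 * vanAlbada a c - a)
          = 2 * (vanAlbada a b - vanAlbada a c) by ring, abs_mul, abs_two]
        ring
    _ ≤ (|2 * vanAlbada a b - a| + |2 * vanAlbada a c - a|) / 2 := by
        gcongr; exact abs_sub _ _
    _ ≤ √2 * |a| := by
        linarith [abs_two_mul_vanAlbada_sub_le a b, abs_two_mul_vanAlbada_sub_le a c]

lemma mul_add_half_vanAlbada_sub_nonneg (a b c : ℝ) :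
    0 ≤ a * (a + (vanAlbada a b - vanAlbada a c) / 2) := by
  have hd := abs_vanAlbada_sub_vanAlbada_le a b c
  have hsqrt : √2 ≤ 2 := by
    rw [Real.sqrt_le_left (by norm_num)]; norm_num
  have := neg_abs_le (a * (vanAlbada a b - vanAlbada a c))
  rw [abs_mul] at this
  nlinarith [abs_mul_abs_self a, abs_nonneg a, mul_le_mul_of_nonneg_left hd (abs_nonneg a)]

lemma Monotone.div_nonneg_of_mul_sub_nonneg {f : ℝ → ℝ} (hf : Monotone f) {a x y : ℝ}
    (h : 0 ≤ a * (y - x)) : 0 ≤ (f y - f x) / a := by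
  rcases lt_trichotomy a 0 with ha | rfl | ha
  · have hyx : y ≤ x := by nlinarith
    exact div_nonneg_of_nonpos (sub_nonpos.2 (hf hyx)) ha.le
  · simp
  · have hxy : x ≤ y := by nlinarith
    exact div_nonneg (sub_nonneg.2 (hf hxy)) ha.le

lemma Antitone.neg_div_nonneg_of_mul_sub_nonneg {f : ℝ → ℝ} (hf : Antitone f) {a x y : ℝ}
    (h : 0 ≤ a * (y - x)) : 0 ≤ -((f y - f x) / a) := by
  have := hf.neg.div_nonneg_of_mul_sub_nonneg h
  rwa [neg_sub_neg, ← neg_sub, neg_div] at this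

/-- For a monotone C¹ numerical flux and the van Albada MUSCL reconstruction,
the incremental coefficients `C_{j−1/2}` and `D_{j+1/2}` are nonnegative.
Here `um j = u⁻_{j+1/2}` and `up j = u⁺_{j+1/2}`. -/
theorem monotone_flux_incremental_coeffs_nonneg
    (F : ℝ → ℝ → ℝ) (hF : ContDiff ℝ 1 fun p : ℝ × ℝ => F p.1 p.2)
    (hFu : ∀ x y : ℝ, 0 ≤ deriv (fun u => F u y) x)
    (hFv : ∀ x y : ℝ, deriv (fun v => F x v) y ≤ 0)
    (u u' um up : ℤ → ℝ)
    (hu' : ∀ j : ℤ, u' j = vanAlbada (u j - u (j - 1)) (u (j + 1) - u j))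
    (hum : ∀ j : ℤ, um j = u j + u' j / 2)
    (hup : ∀ j : ℤ, up j = u (j + 1) - u' (j + 1) / 2) :
    ∀ j : ℤ,
      (u j - u (j - 1) ≠ 0 →
        0 ≤ (F (um j) (up (j - 1)) - F (um (j - 1)) (up (j - 1))) /
            (u j - u (j - 1))) ∧
      (u (j + 1) - u j ≠ 0 →
        0 ≤ -((F (um j) (up j) - F (um j) (up (j - 1))) /
            (u (j + 1) - u j))) := by
  intro j
  have hdiff : Differentiable ℝ fun p : ℝ × ℝ => F p.1 p.2 := hF.differentiable one_ne_zero
  have hmono (y : ℝ) : Monotone fun x => F x y :=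
    monotone_of_deriv_nonneg (hdiff.comp (differentiable_id.prodMk (differentiable_const y)))
      (hFu · y)
  have hanti (x : ℝ) : Antitone fun y => F x y :=
    antitone_of_deriv_nonpos (hdiff.comp ((differentiable_const x).prodMk differentiable_id))
      (hFv x)
  have hC : 0 ≤ (u j - u (j - 1)) * (um j - um (j - 1)) := by
    rw [hum, hum, hu', hu' (j - 1), sub_add_cancel, vanAlbada_comm _ (u j - u (j - 1))]
    convert mul_add_half_vanAlbada_sub_nonneg (u j - u (j - 1)) (u (j + 1) - u j)
      (u (j - 1) - u (j - 1 - 1)) using 2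
    ring
  have hD : 0 ≤ (u (j + 1) - u j) * (up j - up (j - 1)) := by
    rw [hup, hup, sub_add_cancel, hu' (j + 1), hu', add_sub_cancel_right,
      vanAlbada_comm (u j - u (j - 1))]
    convert mul_add_half_vanAlbada_sub_nonneg (u (j + 1) - u j) (u j - u (j - 1))
      (u (j + 1 + 1) - u (j + 1)) using 2
    ring
  exact ⟨fun _ => (hmono _).div_nonneg_of_mul_sub_nonneg hC,
    fun _ => (hanti _).neg_div_nonneg_of_mul_sub_nonneg hD⟩
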